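/- [Joint decrease lemma for forward–backward] Let K ⊆ E be a nonempty closed convex set, let f : E → ℝ be convex and differentiable with gradient ∇f Lipschitz with constant M ≥ 0, let g : E → ℝ be convex, and let λ > 0. Given x ∈ E, let x⁺ ∈ K be a minimizer over K of y ↦ g(y) + (1/(2λ))‖y − (x − λ·∇f(x))‖². Then for every z ∈ K: f(x⁺) + g(x⁺) − (f(z) + g(z)) ≤ (1/(2λ))·(‖x − z‖² − ‖x⁺ − z‖²) + (M/2 − 1/(2λ))·‖x⁺ − x‖². -/

import Mathlib

open Set InnerProductSpace intervalIntegral Filter Topology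

-- line derivative
lemma line_hasDerivAt {E : Type*} [NormedAddCommGroup E] [InnerProductSpace ℝ E]
    [CompleteSpace E] (f : E → ℝ) (f' : E → E)
    (hgrad : ∀ x, HasGradientAt f (f' x) x) (x v : E) (t : ℝ) :
    HasDerivAt (fun s : ℝ => f (x + s • v)) ⟪f' (x + t • v), v⟫_ℝ t := by
  have h1 : HasFDerivAt f (toDual ℝ E (f' (x + t • v))) (x + t • v) :=
    (hasGradientAt_iff_hasFDerivAt).1 (hgrad (x + t • v))
  have h2 : HasDerivAt (fun s : ℝ => x + s • v) v t := by
    simpa using ((hasDerivAt_id t).smul_const v).const_add x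
  have h3 := h1.comp_hasDerivAt t h2
  simp at h3
  exact h3

-- descent lemma
lemma descent_lemma {E : Type*} [NormedAddCommGroup E] [InnerProductSpace ℝ E]
    [CompleteSpace E] (f : E → ℝ) (f' : E → E) (M : ℝ)
    (hgrad : ∀ x, HasGradientAt f (f' x) x) (hM : 0 ≤ M)
    (hlip : ∀ x y, ‖f' x - f' y‖ ≤ M * ‖x - y‖) (x y : E) :
    f y ≤ f x + ⟪f' x, y - x⟫_ℝ + M / 2 * ‖y - x‖ ^ 2 := by
  set v := y - x with hv
  have hcontf' : Continuous f' := by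
    have hl : LipschitzWith ⟨M, hM⟩ f' :=
      LipschitzWith.of_dist_le_mul fun a b => by
        rw [dist_eq_norm, dist_eq_norm]; exact hlip a b
    exact hl.continuous
  have hline : ∀ t : ℝ, HasDerivAt (fun s : ℝ => f (x + s • v))
      ⟪f' (x + t • v), v⟫_ℝ t := line_hasDerivAt f f' hgrad x v
  have hcontd : Continuous fun t : ℝ => ⟪f' (x + t • v), v⟫_ℝ := by
    exact (hcontf'.comp (by continuity)).inner continuous_const
  have hint : f (x + (1:ℝ) • v) - f (x + (0:ℝ) • v)
      = ∫ t in (0:ℝ)..1, ⟪f' (x + t • v), v⟫_ℝ := by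
    rw [intervalIntegral.integral_eq_sub_of_hasDerivAt (fun t _ => hline t)
      (hcontd.intervalIntegrable 0 1)]
  have hbound : ∀ t ∈ Set.Icc (0:ℝ) 1,
      ⟪f' (x + t • v), v⟫_ℝ ≤ ⟪f' x, v⟫_ℝ + M * t * ‖v‖ ^ 2 := by
    intro t ht
    have h1 : ⟪f' (x + t • v) - f' x, v⟫_ℝ ≤ ‖f' (x + t • v) - f' x‖ * ‖v‖ :=
      real_inner_le_norm _ _
    have h2 : ‖f' (x + t • v) - f' x‖ ≤ M * (t * ‖v‖) := by
      have := hlip (x + t • v) x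
      simpa [norm_smul, abs_of_nonneg ht.1] using this
    have h3 : ‖f' (x + t • v) - f' x‖ * ‖v‖ ≤ M * (t * ‖v‖) * ‖v‖ :=
      mul_le_mul_of_nonneg_right h2 (norm_nonneg _)
    have h4 : ⟪f' (x + t • v) - f' x, v⟫_ℝ = ⟪f' (x + t • v), v⟫_ℝ - ⟪f' x, v⟫_ℝ := by
      rw [inner_sub_left]
    nlinarith [sq_nonneg ‖v‖]
  have hintle : (∫ t in (0:ℝ)..1, ⟪f' (x + t • v), v⟫_ℝ)
      ≤ ∫ t in (0:ℝ)..1, (⟪f' x, v⟫_ℝ + M * t * ‖v‖ ^ 2) := by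
    apply intervalIntegral.integral_mono_on zero_le_one
      (hcontd.intervalIntegrable 0 1)
      ((by continuity : Continuous fun t : ℝ => ⟪f' x, v⟫_ℝ + M * t * ‖v‖ ^ 2).intervalIntegrable 0 1)
      hbound
  have hintA : IntervalIntegrable (fun t : ℝ => M * t * ‖v‖ ^ 2) MeasureTheory.volume 0 1 :=
    ((continuous_const.mul continuous_id').mul continuous_const).intervalIntegrable 0 1
  have hrhs : (∫ t in (0:ℝ)..1, (⟪f' x, v⟫_ℝ + M * t * ‖v‖ ^ 2))
      = ⟪f' x, v⟫_ℝ + M / 2 * ‖v‖ ^ 2 := by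
    rw [intervalIntegral.integral_add intervalIntegrable_const hintA]
    have he : (fun t : ℝ => M * t * ‖v‖ ^ 2) = fun t : ℝ => (M * ‖v‖ ^ 2) * t := by
      funext t; ring
    rw [he, intervalIntegral.integral_const_mul, integral_id]
    simp; ring
  simp only [one_smul, zero_smul, add_zero] at hint
  have : x + v = y := by rw [hv]; abel
  rw [this] at hint
  linarith [hint ▸ hintle, hrhs ▸ hintle]

-- gradient inequality for convex functions
lemma convex_grad_ineq {E : Type*} [NormedAddCommGroup E] [InnerProductSpace ℝ E]
    [CompleteSpace E] (f : E → ℝ) (f' : E → E)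
    (hconvf : ConvexOn ℝ Set.univ f)
    (hgrad : ∀ x, HasGradientAt f (f' x) x) (x z : E) :
    f x + ⟪f' x, z - x⟫_ℝ ≤ f z := by
  set v := z - x with hv
  set φ : ℝ → ℝ := fun s => f (x + s • v) with hφ
  have hD : HasDerivAt φ ⟪f' x, v⟫_ℝ 0 := by
    simpa using line_hasDerivAt f f' hgrad x v 0
  have hslope : Tendsto (slope φ 0) (𝓝[≠] 0) (𝓝 ⟪f' x, v⟫_ℝ) :=
    hasDerivAt_iff_tendsto_slope.1 hD
  have hslope' : Tendsto (slope φ 0) (𝓝[>] 0) (𝓝 ⟪f' x, v⟫_ℝ) :=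
    hslope.mono_left (nhdsWithin_mono 0 fun t ht => ne_of_gt ht)
  have hub : ∀ᶠ t in 𝓝[>] (0:ℝ), slope φ 0 t ≤ f z - f x := by
    filter_upwards [Ioc_mem_nhdsGT_of_mem (Set.left_mem_Ico.2 one_pos)] with t ht
    have hconv := hconvf.2 (Set.mem_univ x) (Set.mem_univ z)
      (by linarith [ht.2] : (0:ℝ) ≤ 1 - t) (le_of_lt ht.1) (by ring)
    have hxt : (1 - t) • x + t • z = x + t • v := by
      rw [hv]; module
    rw [hxt] at hconv
    have : φ t ≤ (1 - t) * f x + t * f z := hconv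
    have h0 : φ 0 = f x := by simp [hφ]
    rw [slope_def_field, sub_zero, div_le_iff₀ ht.1]
    simp only [h0] at this ⊢
    nlinarith
  have := le_of_tendsto hslope' hub
  linarith

-- prox optimality
lemma prox_opt {E : Type*} [NormedAddCommGroup E] [InnerProductSpace ℝ E]
    [CompleteSpace E] (K : Set E) (hcv : Convex ℝ K) (g : E → ℝ)
    (hconvg : ConvexOn ℝ Set.univ g) (lam : ℝ) (hlam : 0 < lam)
    (u xp : E) (hxpK : xp ∈ K)
    (hxp : ∀ y ∈ K, g xp + 1 / (2 * lam) * ‖xp - u‖ ^ 2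
        ≤ g y + 1 / (2 * lam) * ‖y - u‖ ^ 2)
    (z : E) (hz : z ∈ K) :
    g xp ≤ g z + (1 / lam) * ⟪xp - u, z - xp⟫_ℝ := by
  set v := z - xp with hv
  have key : ∀ t ∈ Set.Ioc (0:ℝ) 1,
      0 ≤ g z - g xp + (1/lam) * ⟪xp - u, v⟫_ℝ + t * (1/(2*lam)) * ‖v‖ ^ 2 := by
    intro t ht
    have hyK : xp + t • v ∈ K := by
      have : (1 - t) • xp + t • z = xp + t • v := by rw [hv]; module
      exact this ▸ hcv hxpK hz (by linarith [ht.2]) (le_of_lt ht.1) (by ring)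
    have h1 := hxp _ hyK
    have h2 : g (xp + t • v) ≤ (1 - t) * g xp + t * g z := by
      have hconv := hconvg.2 (Set.mem_univ xp) (Set.mem_univ z)
        (by linarith [ht.2] : (0:ℝ) ≤ 1 - t) (le_of_lt ht.1) (by ring)
      have : (1 - t) • xp + t • z = xp + t • v := by rw [hv]; module
      rw [this] at hconv; exact hconv
    have h3 : ‖xp + t • v - u‖ ^ 2
        = ‖xp - u‖ ^ 2 + 2 * t * ⟪xp - u, v⟫_ℝ + t ^ 2 * ‖v‖ ^ 2 := by
      have : xp + t • v - u = (xp - u) + t • v := by abel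
      rw [this, norm_add_sq_real, real_inner_smul_right, norm_smul]
      simp [mul_pow, abs_of_nonneg (le_of_lt ht.1)]
      ring
    rw [h3] at h1
    have hl2 : 0 < 2 * lam := by linarith
    have ht0 := ht.1
    have hexp : 1 / (2 * lam) * (‖xp - u‖ ^ 2 + 2 * t * ⟪xp - u, v⟫_ℝ + t ^ 2 * ‖v‖ ^ 2)
        = 1 / (2 * lam) * ‖xp - u‖ ^ 2 + t * ((1/lam) * ⟪xp - u, v⟫_ℝ)
          + t * (t * (1/(2*lam)) * ‖v‖ ^ 2) := by
      field_simp
    rw [hexp] at h1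
    have h4 : 0 ≤ t * (g z - g xp + (1/lam) * ⟪xp - u, v⟫_ℝ + t * (1/(2*lam)) * ‖v‖ ^ 2) := by
      nlinarith
    nlinarith
  have htend : Tendsto (fun t : ℝ =>
      g z - g xp + (1/lam) * ⟪xp - u, v⟫_ℝ + t * (1/(2*lam)) * ‖v‖ ^ 2) (𝓝[>] 0)
      (𝓝 (g z - g xp + (1/lam) * ⟪xp - u, v⟫_ℝ)) := by
    have : Continuous fun t : ℝ =>
        g z - g xp + (1/lam) * ⟪xp - u, v⟫_ℝ + t * (1/(2*lam)) * ‖v‖ ^ 2 := by continuity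
    have h0 := (this.tendsto 0).mono_left (nhdsWithin_le_nhds (s := Set.Ioi (0:ℝ)))
    simpa using h0
  have hub : ∀ᶠ t in 𝓝[>] (0:ℝ), 0 ≤
      g z - g xp + (1/lam) * ⟪xp - u, v⟫_ℝ + t * (1/(2*lam)) * ‖v‖ ^ 2 := by
    filter_upwards [Ioc_mem_nhdsGT_of_mem (Set.left_mem_Ico.2 one_pos)] with t ht
    exact key t ht
  have := ge_of_tendsto htend hub
  linarith

/-- Joint decrease lemma for the forward–backward (proximal-gradient) step. -/
theorem forward_backward_joint_decrease
    {E : Type*} [NormedAddCommGroup E] [InnerProductSpace ℝ E] [CompleteSpace E]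
    (K : Set E) (hne : K.Nonempty) (hcl : IsClosed K) (hcv : Convex ℝ K)
    (f : E → ℝ) (f' : E → E) (g : E → ℝ) (M lam : ℝ)
    (hconvf : ConvexOn ℝ Set.univ f)
    (hgrad : ∀ x, HasGradientAt f (f' x) x)
    (hM : 0 ≤ M) (hlip : ∀ x y, ‖f' x - f' y‖ ≤ M * ‖x - y‖)
    (hconvg : ConvexOn ℝ Set.univ g) (hlam : 0 < lam)
    (x xp : E) (hxpK : xp ∈ K)
    (hxp : ∀ y ∈ K, g xp + 1 / (2 * lam) * ‖xp - (x - lam • f' x)‖ ^ 2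
        ≤ g y + 1 / (2 * lam) * ‖y - (x - lam • f' x)‖ ^ 2)
    (z : E) (hz : z ∈ K) :
    f xp + g xp - (f z + g z)
      ≤ 1 / (2 * lam) * (‖x - z‖ ^ 2 - ‖xp - z‖ ^ 2)
        + (M / 2 - 1 / (2 * lam)) * ‖xp - x‖ ^ 2 := by
  have hdesc := descent_lemma f f' M hgrad hM hlip x xp
  have hconv := convex_grad_ineq f f' hconvf hgrad x z
  have hopt := prox_opt K hcv g hconvg lam hlam (x - lam • f' x) xp hxpK hxp z hz
  set A := ⟪f' x, xp - x⟫_ℝ with hA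
  set B := ⟪f' x, z - xp⟫_ℝ with hB
  set C := ⟪xp - x, z - xp⟫_ℝ with hC
  have e1 : ⟪xp - (x - lam • f' x), z - xp⟫_ℝ = C + lam * B := by
    have h : xp - (x - lam • f' x) = (xp - x) + lam • f' x := by abel
    rw [h, inner_add_left, real_inner_smul_left]
  have e2 : ⟪f' x, z - x⟫_ℝ = B + A := by
    rw [hB, hA, ← inner_add_right]
    congr 1; abel
  have e3 : C = (‖x - z‖ ^ 2 - ‖xp - z‖ ^ 2 - ‖xp - x‖ ^ 2) / 2 := by
    have h : x - z = (x - xp) + (xp - z) := by abel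
    have h2 : ⟪x - xp, xp - z⟫_ℝ = C := by
      rw [hC]
      have ha : x - xp = -(xp - x) := by abel
      have hb : xp - z = -(z - xp) := by abel
      rw [ha, hb, inner_neg_neg]
    have hn : ‖x - xp‖ = ‖xp - x‖ := norm_sub_rev _ _
    rw [h, norm_add_sq_real, h2, hn]
    ring
  rw [e1] at hopt
  rw [e2] at hconv
  have hlam' : lam ≠ 0 := ne_of_gt hlam
  have hsplit : (1/lam) * (C + lam * B) = (1/lam) * C + B := by
    field_simp
  have hC3 : (1/lam) * C
      = 1 / (2 * lam) * (‖x - z‖ ^ 2 - ‖xp - z‖ ^ 2) - 1 / (2 * lam) * ‖xp - x‖ ^ 2 := by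
    have h2l : (1:ℝ)/(2*lam) = (1/2) * (1/lam) := by
      rw [one_div, mul_inv]; ring
    rw [e3, h2l]; ring
  linarith
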